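/- For each j ≥ 1 let v_j : [0,T] → ℝ be integrable, set w_j(t) = ∫_0^t v_j(s) ds, and let J_n^{(j)} denote the iterated ordinary integrals built from f_1,…,f_n and v_j (J_0^{(j)}(t) = 1 and J_k^{(j)}(t) = ∫_0^t f_k(s) J_{k−1}^{(j)}(s) v_j(s) ds). Suppose w : [0,T] → ℝ is continuous, w_j(t) → w(t) as j → ∞ for every t ∈ [0,T], and there exists K > 0 with |w_j(t)| ≤ K for all j ≥ 1 and all t ∈ [0,T]. Then J_n^{(j)}(t) → Φ_n[w](t) as j → ∞ for every t ∈ [0,T]. -/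

import Mathlib

/-!
Write `W_m(t) = ∫₀ᵗ v_m` and `F_k = ∏_{l=1}^k f_{j+1-l}`. The iterated integrals `J_m` obey
the recursion defining `Φ[W_m]`: `J_{m,i}` and `W_m^p / p!` are absolutely continuous, so
integration by parts turns `R_p = ∫₀ᵗ F_p J_{m,j-p}' W_m^p / p!` into `X_{p+1} - R_{p+1}`, where
`X_k` is the `k`-th term of the recursion; since `R_0 = J_{m,j}(t)` and `R_j = 0`, telescoping gives
`J_{m,j}(t) = Σ_k (-1)^{k+1} X_k`. The right-hand side of the recursion is bounded uniformly over
`|u| ≤ K`, and it passes to the limit along pointwise convergent, uniformly bounded `u_m` by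
dominated convergence, so induction on `j` gives `J_{m,n}(t) → Φ_n[w](t)`.
-/

open MeasureTheory Filter Set intervalIntegral Topology
open scoped Nat Interval

theorem AbsolutelyContinuousOnInterval.pow {g : ℝ → ℝ} {a b : ℝ}
    (hg : AbsolutelyContinuousOnInterval g a b) :
    ∀ p : ℕ, AbsolutelyContinuousOnInterval (fun x => g x ^ p) a b
  | 0 => by simpa using (contDiffOn_const (c := (1 : ℝ))).absolutelyContinuousOnInterval
  | p + 1 => by simpa only [pow_succ] using (hg.pow p).fun_mul hg

theorem AbsolutelyContinuousOnInterval.pow_div_factorial {W : ℝ → ℝ} {a b : ℝ}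
    (hW : AbsolutelyContinuousOnInterval W a b) (p : ℕ) :
    AbsolutelyContinuousOnInterval (fun x => W x ^ p / p !) a b := by
  convert (hW.pow p).const_mul ((p ! : ℝ)⁻¹) using 1
  funext x
  ring

theorem ae_hasDerivAt_pow_div_factorial {W v : ℝ → ℝ} {a b : ℝ}
    (hW : ∀ᵐ x, x ∈ Ι a b → HasDerivAt W (v x) x) (p : ℕ) :
    ∀ᵐ x, x ∈ Ι a b →
      HasDerivAt (fun x => W x ^ (p + 1) / (p + 1)!) (W x ^ p / p ! * v x) x := by
  filter_upwards [hW] with x hx hxab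
  refine (((hx hxab).pow (p + 1)).div_const ((p + 1)! : ℝ)).congr_deriv ?_
  rw [Nat.factorial_succ]
  push_cast
  field_simp

theorem AbsolutelyContinuousOnInterval.integral_mul_eq_of_ae_hasDerivAt {f g f' g' : ℝ → ℝ}
    {a b : ℝ} (hf : AbsolutelyContinuousOnInterval f a b)
    (hg : AbsolutelyContinuousOnInterval g a b)
    (hf' : ∀ᵐ x, x ∈ Ι a b → HasDerivAt f (f' x) x)
    (hg' : ∀ᵐ x, x ∈ Ι a b → HasDerivAt g (g' x) x) :
    ∫ x in a..b, f x * g' x = f b * g b - f a * g a - ∫ x in a..b, f' x * g x := by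
  have hfg : ∫ x in a..b, f x * g' x = ∫ x in a..b, f x * deriv g x :=
    integral_congr_ae <| by filter_upwards [hg'] with x hx hxab using by rw [(hx hxab).deriv]
  have hf'g : ∫ x in a..b, f' x * g x = ∫ x in a..b, deriv f x * g x :=
    integral_congr_ae <| by filter_upwards [hf'] with x hx hxab using by rw [(hx hxab).deriv]
  rw [hfg, hf'g, hf.integral_mul_deriv_eq_deriv_mul hg]

theorem ae_hasDerivAt_of_hasDerivWithinAt_Icc {g g' : ℝ → ℝ} {a b t : ℝ} (hat : a ≤ t)
    (htb : t ≤ b) (hg : ∀ x ∈ Icc a b, HasDerivWithinAt g (g' x) (Icc a b) x) :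
    ∀ᵐ x, x ∈ Ι a t → HasDerivAt g (g' x) x := by
  filter_upwards [Measure.ae_ne volume t] with x hxt hx
  rw [uIoc_of_le hat] at hx
  have hx' : x ∈ Ioo a b := ⟨hx.1, (lt_of_le_of_ne hx.2 hxt).trans_le htb⟩
  exact (hg x (Ioo_subset_Icc_self hx')).hasDerivAt (Icc_mem_nhds hx'.1 hx'.2)

theorem ContDiffOn.continuousOn_of_hasDerivWithinAt_Icc {g g' : ℝ → ℝ} {a b : ℝ}
    (hab : a < b) (hg : ContDiffOn ℝ 1 g (Icc a b))
    (hg' : ∀ x ∈ Icc a b, HasDerivWithinAt g (g' x) (Icc a b) x) :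
    ContinuousOn g' (Icc a b) :=
  (hg.continuousOn_derivWithin (uniqueDiffOn_Icc hab) le_rfl).congr fun x hx =>
    ((hg' x hx).derivWithin (uniqueDiffOn_Icc hab x hx)).symm

theorem IntervalIntegrable.ae_hasDerivAt_primitive {g : ℝ → ℝ} {a b : ℝ}
    (hg : IntervalIntegrable g volume a b) :
    ∀ᵐ x, x ∈ Ι a b → HasDerivAt (fun x => ∫ s in a..x, g s) (g x) x := by
  filter_upwards [hg.ae_hasDerivAt_integral] with x hx hxab
  exact hx (uIoc_subset_uIcc hxab) a left_mem_uIcc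

theorem continuousOn_intervalIntegral_Icc {g : ℝ → ℝ} {a b : ℝ}
    (hg : IntegrableOn g (Icc a b)) :
    ContinuousOn (fun x => ∫ s in a..x, g s) (Icc a b) := by
  rcases le_or_gt a b with hab | hab
  · rw [← uIcc_of_le hab] at hg ⊢
    exact continuousOn_primitive_interval hg
  · simp [Icc_eq_empty_of_lt hab]

theorem abs_mul_mul_le {a b c A B C : ℝ} (ha : |a| ≤ A) (hb : |b| ≤ B) (hc : |c| ≤ C) :
    |a * b * c| ≤ A * B * C := by
  have hA := (abs_nonneg a).trans ha
  have hB := (abs_nonneg b).trans hb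
  rw [abs_mul, abs_mul]
  gcongr

theorem abs_pow_div_factorial_le {x K : ℝ} (hx : |x| ≤ K) (k : ℕ) :
    |x ^ k / k !| ≤ K ^ k / k ! := by
  rw [abs_div, abs_pow, Nat.abs_cast]
  gcongr

theorem eq_sum_alternating_of_eq_sub {R : Type*} [CommRing R] {a x : ℕ → R} (j : ℕ)
    (h : ∀ p < j, a p = x (p + 1) - a (p + 1)) :
    a 0 = ∑ k ∈ Finset.Icc 1 j, (-1) ^ (k + 1) * x k + (-1) ^ j * a j := by
  induction j with
  | zero => simp
  | succ j ih =>
    rw [ih fun p hp => h p (by omega), Finset.sum_Icc_succ_top (by omega), h j (by omega)]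
    ring

def coeffProd (f : ℕ → ℝ → ℝ) (j k : ℕ) (s : ℝ) : ℝ :=
  ∏ l ∈ Finset.Icc 1 k, f (j + 1 - l) s

theorem coeffProd_zero (f : ℕ → ℝ → ℝ) (j : ℕ) (s : ℝ) : coeffProd f j 0 s = 1 := by
  simp [coeffProd]

theorem coeffProd_succ (f : ℕ → ℝ → ℝ) (j k : ℕ) (s : ℝ) :
    coeffProd f j (k + 1) s = coeffProd f j k s * f (j - k) s := by
  rw [coeffProd, Finset.prod_Icc_succ_top (by omega), Nat.add_sub_add_right]
  rfl

theorem contDiffOn_coeffProd {T : ℝ} {n : ℕ} {f : ℕ → ℝ → ℝ}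
    (hf : ∀ i, 1 ≤ i → i ≤ n → ContDiffOn ℝ 1 (f i) (Icc 0 T)) {j k : ℕ}
    (hkj : k ≤ j) (hjn : j ≤ n) : ContDiffOn ℝ 1 (coeffProd f j k) (Icc 0 T) :=
  contDiffOn_prod fun l hl => hf _ (by grind) (by grind)

/-- The right-hand side of the recursion defining `Φ_j[u](t)`, with `Ψ i` in place of `Φ_i[u]`. -/
noncomputable def phiStep (f : ℕ → ℝ → ℝ) (fd : ℕ → ℕ → ℝ → ℝ) (Ψ : ℕ → ℝ → ℝ) (u : ℝ → ℝ)
    (j : ℕ) (t : ℝ) : ℝ :=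
  (∑ k ∈ Finset.Icc 1 j,
      (-1 : ℝ) ^ (k + 1) * Ψ (j - k) t * (u t ^ k / (k ! : ℝ)) * coeffProd f j k t)
    + ∑ k ∈ Finset.Icc 1 j,
      (-1 : ℝ) ^ k * ∫ s in (0 : ℝ)..t, Ψ (j - k) s * (u s ^ k / (k ! : ℝ)) * fd j k s

section PhiStep

variable {T : ℝ} {f : ℕ → ℝ → ℝ} {fd : ℕ → ℕ → ℝ → ℝ} {j : ℕ}

theorem exists_abs_coeffProd_le_and_abs_fd_le
    (hF : ∀ k ∈ Finset.Icc 1 j, ContinuousOn (coeffProd f j k) (Icc 0 T))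
    (hfd : ∀ k ∈ Finset.Icc 1 j, ContinuousOn (fd j k) (Icc 0 T)) :
    ∃ M, ∀ k ∈ Finset.Icc 1 j, ∀ s ∈ Icc 0 T,
      |coeffProd f j k s| ≤ M ∧ |fd j k s| ≤ M := by
  obtain ⟨M, hM⟩ := isCompact_Icc.exists_bound_of_continuousOn
    (continuousOn_finsetSum (Finset.Icc 1 j) fun k hk => (hF k hk).abs.add (hfd k hk).abs)
  refine ⟨M, fun k hk s hs => ?_⟩
  have hsum : ∑ i ∈ Finset.Icc 1 j, (|coeffProd f j i s| + |fd j i s|) ≤ M :=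
    (Real.le_norm_self _).trans (hM s hs)
  have hk := Finset.single_le_sum (f := fun k => |coeffProd f j k s| + |fd j k s|)
    (fun _ _ => by positivity) hk
  constructor <;> linarith [abs_nonneg (coeffProd f j k s), abs_nonneg (fd j k s)]

theorem exists_abs_phiStep_le (hT : 0 ≤ T)
    (hF : ∀ k ∈ Finset.Icc 1 j, ContinuousOn (coeffProd f j k) (Icc 0 T))
    (hfd : ∀ k ∈ Finset.Icc 1 j, ContinuousOn (fd j k) (Icc 0 T)) (C K : ℝ) :
    ∃ B, ∀ (Ψ : ℕ → ℝ → ℝ) (u : ℝ → ℝ), (∀ i < j, ∀ s ∈ Icc 0 T, |Ψ i s| ≤ C) →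
      (∀ s ∈ Icc 0 T, |u s| ≤ K) → ∀ t ∈ Icc 0 T, |phiStep f fd Ψ u j t| ≤ B := by
  obtain ⟨M, hM⟩ := exists_abs_coeffProd_le_and_abs_fd_le hF hfd
  refine ⟨∑ k ∈ Finset.Icc 1 j, C * (K ^ k / k !) * M * (1 + T), fun Ψ u hΨ hu t ht => ?_⟩
  have hterm : ∀ k ∈ Finset.Icc 1 j, ∀ g : ℝ → ℝ, (∀ s ∈ Icc 0 T, |g s| ≤ M) →
      ∀ s ∈ Icc 0 T, |Ψ (j - k) s * (u s ^ k / k !) * g s| ≤ C * (K ^ k / k !) * M :=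
    fun k hk g hg s hs => abs_mul_mul_le (hΨ _ (by grind) s hs)
      (abs_pow_div_factorial_le (hu s hs) k) (hg s hs)
  have hpoint : ∀ k ∈ Finset.Icc 1 j, |(-1 : ℝ) ^ (k + 1) * Ψ (j - k) t * (u t ^ k / k !)
      * coeffProd f j k t| ≤ C * (K ^ k / k !) * M := fun k hk => by
    simpa [abs_mul] using hterm k hk _ (fun s hs => (hM k hk s hs).1) t ht
  have hint : ∀ k ∈ Finset.Icc 1 j, |(-1 : ℝ) ^ k * ∫ s in (0 : ℝ)..t,
      Ψ (j - k) s * (u s ^ k / k !) * fd j k s| ≤ C * (K ^ k / k !) * M * T := fun k hk => by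
    have hfdM : ∀ s ∈ Icc 0 T, |fd j k s| ≤ M := fun s hs => (hM k hk s hs).2
    have hnonneg := (abs_nonneg _).trans (hterm k hk _ hfdM 0 ⟨le_rfl, hT⟩)
    have := intervalIntegral.norm_integral_le_of_norm_le_const (a := 0) (b := t)
      (f := fun s => Ψ (j - k) s * (u s ^ k / k !) * fd j k s) fun s hs => by
        rw [uIoc_of_le ht.1] at hs
        exact hterm k hk _ hfdM s ⟨hs.1.le, hs.2.trans ht.2⟩
    rw [Real.norm_eq_abs, sub_zero, abs_of_nonneg ht.1] at this
    simpa using this.trans (mul_le_mul_of_nonneg_left ht.2 hnonneg)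
  calc |phiStep f fd Ψ u j t|
      ≤ ∑ k ∈ Finset.Icc 1 j, C * (K ^ k / k !) * M
        + ∑ k ∈ Finset.Icc 1 j, C * (K ^ k / k !) * M * T :=
        (abs_add_le _ _).trans <| add_le_add
          ((Finset.abs_sum_le_sum_abs _ _).trans (Finset.sum_le_sum hpoint))
          ((Finset.abs_sum_le_sum_abs _ _).trans (Finset.sum_le_sum hint))
    _ = ∑ k ∈ Finset.Icc 1 j, C * (K ^ k / k !) * M * (1 + T) := by
        rw [← Finset.sum_add_distrib]
        exact Finset.sum_congr rfl fun k _ => by ring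

theorem tendsto_phiStep {ι : Type*} {l : Filter ι} [l.IsCountablyGenerated]
    (hfd : ∀ k ∈ Finset.Icc 1 j, ContinuousOn (fd j k) (Icc 0 T))
    {Ψ : ι → ℕ → ℝ → ℝ} {u : ι → ℝ → ℝ} {Ψlim : ℕ → ℝ → ℝ} {ulim : ℝ → ℝ}
    {C K : ℝ}
    (hΨc : ∀ m, ∀ i < j, ContinuousOn (Ψ m i) (Icc 0 T))
    (huc : ∀ m, ContinuousOn (u m) (Icc 0 T))
    (hΨb : ∀ m, ∀ i < j, ∀ s ∈ Icc 0 T, |Ψ m i s| ≤ C)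
    (hub : ∀ m, ∀ s ∈ Icc 0 T, |u m s| ≤ K)
    (hΨ : ∀ i < j, ∀ s ∈ Icc 0 T, Tendsto (fun m => Ψ m i s) l (𝓝 (Ψlim i s)))
    (hu : ∀ s ∈ Icc 0 T, Tendsto (fun m => u m s) l (𝓝 (ulim s)))
    {t : ℝ} (ht : t ∈ Icc 0 T) :
    Tendsto (fun m => phiStep f fd (Ψ m) (u m) j t) l (𝓝 (phiStep f fd Ψlim ulim j t)) := by
  have hsub : Ι 0 t ⊆ Icc 0 T := by
    rw [uIoc_of_le ht.1]
    exact fun s hs => ⟨hs.1.le, hs.2.trans ht.2⟩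
  have hlim : ∀ k ∈ Finset.Icc 1 j, ∀ s ∈ Icc 0 T,
      Tendsto (fun m => Ψ m (j - k) s * (u m s ^ k / k !)) l
        (𝓝 (Ψlim (j - k) s * (ulim s ^ k / k !))) := fun k hk s hs =>
    (hΨ _ (by grind) s hs).mul (((hu s hs).pow k).div_const _)
  refine (tendsto_finsetSum _ fun k hk => ?_).add (tendsto_finsetSum _ fun k hk => ?_)
  · simpa only [mul_assoc] using (hlim k hk t ht).mul_const (coeffProd f j k t) |>.const_mul _
  refine (tendsto_integral_filter_of_dominated_convergence
    (fun s => C * (K ^ k / k !) * |fd j k s|)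
    (Eventually.of_forall fun m => ?_) (Eventually.of_forall fun m => ae_of_all _ fun s hs => ?_)
    ?_ (ae_of_all _ fun s hs => (hlim k hk s (hsub hs)).mul_const _)).const_mul _
  · exact ((((hΨc m _ (by grind)).mul ((huc m).pow k |>.div_const _)).mul
      (hfd k hk)).mono hsub).aestronglyMeasurable measurableSet_uIoc
  · exact abs_mul_mul_le (hΨb m _ (by grind) s (hsub hs))
      (abs_pow_div_factorial_le (hub m s (hsub hs)) k) le_rfl
  · refine ContinuousOn.intervalIntegrable ((continuousOn_const.mul (hfd k hk).abs).mono ?_)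
    rw [uIcc_of_le ht.1]
    exact Icc_subset_Icc le_rfl ht.2

theorem exists_bound_of_eq_phiStep {n : ℕ} (hT : 0 ≤ T)
    (hF : ∀ j ≤ n, ∀ k ∈ Finset.Icc 1 j, ContinuousOn (coeffProd f j k) (Icc 0 T))
    (hfd : ∀ j ≤ n, ∀ k ∈ Finset.Icc 1 j, ContinuousOn (fd j k) (Icc 0 T))
    {ι : Type*} {Ψ : ι → ℕ → ℝ → ℝ} {u : ι → ℝ → ℝ} {K : ℝ}
    (hub : ∀ m, ∀ s ∈ Icc 0 T, |u m s| ≤ K) (hΨ0 : ∀ m s, Ψ m 0 s = 1)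
    (hΨ : ∀ m j, 1 ≤ j → j ≤ n → ∀ t ∈ Icc 0 T,
      Ψ m j t = phiStep f fd (Ψ m) (u m) j t) :
    ∃ C, ∀ m, ∀ i ≤ n, ∀ s ∈ Icc 0 T, |Ψ m i s| ≤ C := by
  suffices ∀ j ≤ n, ∃ C, ∀ m, ∀ i ≤ j, ∀ s ∈ Icc 0 T, |Ψ m i s| ≤ C from
    this n le_rfl
  intro j
  induction j with
  | zero => exact fun _ => ⟨1, fun m i hi s _ => by simp [Nat.le_zero.1 hi, hΨ0]⟩
  | succ j ih =>
    intro hjn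
    obtain ⟨C, hC⟩ := ih (by omega)
    obtain ⟨B, hB⟩ := exists_abs_phiStep_le hT (hF _ hjn) (hfd _ hjn) C K
    refine ⟨max C B, fun m i hi s hs => ?_⟩
    rcases Nat.le_succ_iff.1 hi with hi | rfl
    · exact (hC m i hi s hs).trans (le_max_left _ _)
    · rw [hΨ m _ (by omega) hjn s hs]
      exact (hB _ _ (fun i hi => hC m i (by omega)) (hub m) s hs).trans (le_max_right _ _)

theorem tendsto_of_eq_phiStep {n : ℕ} {ι : Type*} {l : Filter ι} [l.IsCountablyGenerated]
    (hfd : ∀ j ≤ n, ∀ k ∈ Finset.Icc 1 j, ContinuousOn (fd j k) (Icc 0 T))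
    {Ψ : ι → ℕ → ℝ → ℝ} {u : ι → ℝ → ℝ} {Ψlim : ℕ → ℝ → ℝ} {ulim : ℝ → ℝ}
    {C K : ℝ}
    (hΨc : ∀ m, ∀ i ≤ n, ContinuousOn (Ψ m i) (Icc 0 T))
    (huc : ∀ m, ContinuousOn (u m) (Icc 0 T))
    (hΨb : ∀ m, ∀ i ≤ n, ∀ s ∈ Icc 0 T, |Ψ m i s| ≤ C)
    (hub : ∀ m, ∀ s ∈ Icc 0 T, |u m s| ≤ K)
    (hu : ∀ s ∈ Icc 0 T, Tendsto (fun m => u m s) l (𝓝 (ulim s)))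
    (hΨ0 : ∀ m s, Ψ m 0 s = 1) (hΨlim0 : ∀ s, Ψlim 0 s = 1)
    (hΨ : ∀ m j, 1 ≤ j → j ≤ n → ∀ t ∈ Icc 0 T,
      Ψ m j t = phiStep f fd (Ψ m) (u m) j t)
    (hΨlim : ∀ j, 1 ≤ j → j ≤ n → ∀ t ∈ Icc 0 T,
      Ψlim j t = phiStep f fd Ψlim ulim j t) :
    ∀ j ≤ n, ∀ t ∈ Icc 0 T, Tendsto (fun m => Ψ m j t) l (𝓝 (Ψlim j t)) := by
  intro j
  induction j using Nat.strong_induction_on with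
  | _ j ih =>
  intro hjn t ht
  rcases Nat.eq_zero_or_pos j with rfl | hj
  · simp only [hΨ0, hΨlim0, tendsto_const_nhds]
  rw [hΨlim j hj hjn t ht]
  refine (tendsto_phiStep (hfd j hjn) (fun m i hi => hΨc m i (by omega)) huc
    (fun m i hi => hΨb m i (by omega)) hub (fun i hi => ih i hi (by omega)) hu ht).congr
    fun m => (hΨ m j hj hjn t ht).symm

end PhiStep

theorem integral_mul_deriv_mul_pow_div_factorial {t : ℝ} {F g G G' A B W v : ℝ → ℝ} (p : ℕ)
    (hG : ∀ x, G x = F x * g x) (hGac : AbsolutelyContinuousOnInterval G 0 t)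
    (hG' : ∀ᵐ x, x ∈ Ι 0 t → HasDerivAt G (G' x) x) (hG'c : ContinuousOn G' (uIcc 0 t))
    (hBac : AbsolutelyContinuousOnInterval B 0 t)
    (hA : ∀ᵐ x, x ∈ Ι 0 t → HasDerivAt A (g x * B x * v x) x)
    (hWac : AbsolutelyContinuousOnInterval W 0 t)
    (hW : ∀ᵐ x, x ∈ Ι 0 t → HasDerivAt W (v x) x) (hW0 : W 0 = 0) :
    ∫ x in 0..t, F x * deriv A x * (W x ^ p / p !) =
      B t * (W t ^ (p + 1) / (p + 1)!) * G t
        - (∫ x in 0..t, B x * (W x ^ (p + 1) / (p + 1)!) * G' x)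
        - ∫ x in 0..t, G x * deriv B x * (W x ^ (p + 1) / (p + 1)!) := by
  have hE := hWac.pow_div_factorial (p + 1)
  have hB' : ∀ᵐ x, x ∈ Ι 0 t → HasDerivAt B (deriv B x) x := by
    filter_upwards [hBac.ae_differentiableAt] with x hx hxt
    exact (hx (uIoc_subset_uIcc hxt)).hasDerivAt
  have hGB : ∀ᵐ x, x ∈ Ι 0 t →
      HasDerivAt (fun x => G x * B x) (G' x * B x + G x * deriv B x) x := by
    filter_upwards [hG', hB'] with x h1 h2 hxt
    exact (h1 hxt).mul (h2 hxt)
  have hLHS : ∫ x in 0..t, F x * deriv A x * (W x ^ p / p !)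
      = ∫ x in 0..t, (G x * B x) * (W x ^ p / p ! * v x) := by
    refine integral_congr_ae ?_
    filter_upwards [hA] with x hx hxt
    rw [(hx hxt).deriv, hG]
    ring
  have hsplit : ∫ x in 0..t, (G' x * B x + G x * deriv B x) * (W x ^ (p + 1) / (p + 1)!)
      = (∫ x in 0..t, B x * (W x ^ (p + 1) / (p + 1)!) * G' x)
        + ∫ x in 0..t, G x * deriv B x * (W x ^ (p + 1) / (p + 1)!) := by
    rw [← intervalIntegral.integral_add]
    · exact integral_congr fun x _ => by ring
    · exact ((hBac.continuousOn.mul hE.continuousOn).mul hG'c).intervalIntegrable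
    · exact (hBac.intervalIntegrable_deriv.continuousOn_mul hGac.continuousOn).mul_continuousOn
        hE.continuousOn
  rw [hLHS, (hGac.fun_mul hBac).integral_mul_eq_of_ae_hasDerivAt hE hGB
    (ae_hasDerivAt_pow_div_factorial hW p), hsplit, hW0, zero_pow (Nat.succ_ne_zero p)]
  ring

theorem eq_phiStep_of_ae_hasDerivAt {t : ℝ} {f : ℕ → ℝ → ℝ} {fd : ℕ → ℕ → ℝ → ℝ}
    {j : ℕ} {v W : ℝ → ℝ} {J : ℕ → ℝ → ℝ}
    (hFac : ∀ k ∈ Finset.Icc 1 j, AbsolutelyContinuousOnInterval (coeffProd f j k) 0 t)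
    (hF' : ∀ k ∈ Finset.Icc 1 j,
      ∀ᵐ x, x ∈ Ι 0 t → HasDerivAt (coeffProd f j k) (fd j k x) x)
    (hfd : ∀ k ∈ Finset.Icc 1 j, ContinuousOn (fd j k) (uIcc 0 t))
    (hWac : AbsolutelyContinuousOnInterval W 0 t)
    (hW' : ∀ᵐ x, x ∈ Ι 0 t → HasDerivAt W (v x) x)
    (hW0 : W 0 = 0) (hJac : ∀ i ≤ j, AbsolutelyContinuousOnInterval (J i) 0 t)
    (hJ' : ∀ i, 1 ≤ i → i ≤ j →
      ∀ᵐ x, x ∈ Ι 0 t → HasDerivAt (J i) (f i x * J (i - 1) x * v x) x)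
    (hJ0 : ∀ x, J 0 x = 1) (hJj : J j 0 = 0) :
    J j t = phiStep f fd J W j t := by
  set E : ℕ → ℝ → ℝ := fun p x => W x ^ p / (p ! : ℝ)
  set R : ℕ → ℝ := fun p => ∫ x in 0..t, coeffProd f j p x * deriv (J (j - p)) x * E p x
  set X : ℕ → ℝ := fun k =>
    J (j - k) t * E k t * coeffProd f j k t - ∫ x in 0..t, J (j - k) x * E k x * fd j k x
  have hR0 : R 0 = J j t := by
    simp only [R, E, coeffProd_zero, Nat.sub_zero, pow_zero, Nat.factorial_zero, Nat.cast_one,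
      div_one, one_mul, mul_one]
    rw [(hJac j le_rfl).integral_deriv_eq_sub, hJj, sub_zero]
  have hRj : R j = 0 := by
    have hJ0' : J 0 = fun _ => 1 := funext hJ0
    simp [R, hJ0']
  have hstep : ∀ p < j, R p = X (p + 1) - R (p + 1) := by
    intro p hp
    have hpj : p + 1 ∈ Finset.Icc 1 j := Finset.mem_Icc.2 ⟨by omega, hp⟩
    have hA := hJ' (j - p) (by omega) (by omega)
    rw [Nat.sub_sub] at hA
    exact integral_mul_deriv_mul_pow_div_factorial p (coeffProd_succ f j p) (hFac _ hpj)
      (hF' _ hpj) (hfd _ hpj) (hJac _ (by omega)) hA hWac hW' hW0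
  rw [← hR0, eq_sum_alternating_of_eq_sub j hstep, hRj, mul_zero, add_zero, phiStep,
    ← Finset.sum_add_distrib]
  refine Finset.sum_congr rfl fun k _ => ?_
  simp only [X, E]
  ring

section IteratedIntegral

variable {T : ℝ} {n : ℕ} {f : ℕ → ℝ → ℝ} {v : ℝ → ℝ} {J : ℕ → ℝ → ℝ}

theorem continuousOn_iterated (hf : ∀ i, 1 ≤ i → i ≤ n → ContinuousOn (f i) (Icc 0 T))
    (hv : IntegrableOn v (Icc 0 T)) (hJ0 : ∀ t, J 0 t = 1)
    (hJ : ∀ k, 1 ≤ k → k ≤ n → ∀ t,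
      J k t = ∫ s in (0 : ℝ)..t, f k s * J (k - 1) s * v s) :
    ∀ i ≤ n, ContinuousOn (J i) (Icc 0 T) := by
  intro i
  induction i with
  | zero => exact fun _ => continuousOn_const.congr fun t _ => hJ0 t
  | succ i ih =>
    intro hi
    exact (continuousOn_intervalIntegral_Icc (IntegrableOn.continuousOn_mul
      ((hf _ (by omega) hi).mul (ih (by omega))) hv isCompact_Icc)).congr
      fun t _ => hJ _ (by omega) hi t

theorem iterated_eq_phiStep {fd : ℕ → ℕ → ℝ → ℝ}
    (hF : ∀ j ≤ n, ∀ k ∈ Finset.Icc 1 j, ContDiffOn ℝ 1 (coeffProd f j k) (Icc 0 T))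
    (hF' : ∀ j ≤ n, ∀ k ∈ Finset.Icc 1 j, ∀ x ∈ Icc 0 T,
      HasDerivWithinAt (coeffProd f j k) (fd j k x) (Icc 0 T) x)
    (hfd : ∀ j ≤ n, ∀ k ∈ Finset.Icc 1 j, ContinuousOn (fd j k) (Icc 0 T))
    (hf : ∀ i, 1 ≤ i → i ≤ n → ContinuousOn (f i) (Icc 0 T))
    (hv : IntegrableOn v (Icc 0 T)) (hJ0 : ∀ t, J 0 t = 1)
    (hJ : ∀ k, 1 ≤ k → k ≤ n → ∀ t,
      J k t = ∫ s in (0 : ℝ)..t, f k s * J (k - 1) s * v s) :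
    ∀ j, 1 ≤ j → j ≤ n → ∀ t ∈ Icc 0 T,
      J j t = phiStep f fd J (fun x => ∫ s in (0 : ℝ)..x, v s) j t := by
  intro j hj hjn t ht
  have hsub : uIcc 0 t ⊆ Icc 0 T := by
    rw [uIcc_of_le ht.1]
    exact Icc_subset_Icc le_rfl ht.2
  have hJc := continuousOn_iterated hf hv hJ0 hJ
  have hJint : ∀ i, 1 ≤ i → i ≤ n →
      IntervalIntegrable (fun s => f i s * J (i - 1) s * v s) volume 0 t := fun i hi hin =>
    ((IntegrableOn.continuousOn_mul ((hf i hi hin).mul (hJc _ (by omega))) hv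
      isCompact_Icc).mono_set hsub).intervalIntegrable
  have hJeq : ∀ i, 1 ≤ i → i ≤ n →
      J i = fun x => ∫ s in (0 : ℝ)..x, f i s * J (i - 1) s * v s :=
    fun i hi hin => funext (hJ i hi hin)
  have hJac : ∀ i ≤ j, AbsolutelyContinuousOnInterval (J i) 0 t := by
    intro i hi
    rcases Nat.eq_zero_or_pos i with rfl | hi0
    · rw [funext hJ0]
      exact contDiffOn_const.absolutelyContinuousOnInterval
    · rw [hJeq i hi0 (hi.trans hjn)]
      exact (hJint i hi0 (hi.trans hjn)).absolutelyContinuousOnInterval_intervalIntegral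
        left_mem_uIcc
  have hJ' : ∀ i, 1 ≤ i → i ≤ j →
      ∀ᵐ x, x ∈ Ι 0 t → HasDerivAt (J i) (f i x * J (i - 1) x * v x) x := by
    intro i hi hij
    rw [hJeq i hi (hij.trans hjn)]
    exact (hJint i hi (hij.trans hjn)).ae_hasDerivAt_primitive
  have hvt : IntervalIntegrable v volume 0 t := (hv.mono_set hsub).intervalIntegrable
  exact eq_phiStep_of_ae_hasDerivAt
    (fun k hk => ((hF j hjn k hk).mono hsub).absolutelyContinuousOnInterval)
    (fun k hk => ae_hasDerivAt_of_hasDerivWithinAt_Icc ht.1 ht.2 (hF' j hjn k hk))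
    (fun k hk => (hfd j hjn k hk).mono hsub)
    (hvt.absolutelyContinuousOnInterval_intervalIntegral left_mem_uIcc)
    hvt.ae_hasDerivAt_primitive integral_same hJac hJ' hJ0 (by rw [hJ j hj hjn, integral_same])

end IteratedIntegral

theorem stmt10_general
    (T : ℝ) (hT : 0 < T) (n : ℕ)
    (f : ℕ → ℝ → ℝ)
    (hf : ∀ i, 1 ≤ i → i ≤ n → ContDiffOn ℝ 1 (f i) (Set.Icc 0 T))
    (fd : ℕ → ℕ → ℝ → ℝ)
    (hfd : ∀ j k, 1 ≤ k → k ≤ j → j ≤ n → ∀ t ∈ Set.Icc (0:ℝ) T,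
      HasDerivWithinAt (fun s => ∏ l ∈ Finset.Icc 1 k, f (j + 1 - l) s)
        (fd j k t) (Set.Icc 0 T) t)
    (Φ : (ℝ → ℝ) → ℕ → ℝ → ℝ)
    (hΦ0 : ∀ u t, Φ u 0 t = 1)
    (hΦ : ∀ u : ℝ → ℝ, ContinuousOn u (Set.Icc 0 T) →
      ∀ j, 1 ≤ j → j ≤ n → ∀ t ∈ Set.Icc (0:ℝ) T,
      Φ u j t
        = (∑ k ∈ Finset.Icc 1 j,
            (-1 : ℝ) ^ (k + 1) * Φ u (j - k) t
              * (u t ^ k / (Nat.factorial k : ℝ))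
              * ∏ l ∈ Finset.Icc 1 k, f (j + 1 - l) t)
        + ∑ k ∈ Finset.Icc 1 j,
            (-1 : ℝ) ^ k *
              ∫ s in (0:ℝ)..t,
                Φ u (j - k) s * (u s ^ k / (Nat.factorial k : ℝ)) * fd j k s)
    (v : ℕ → ℝ → ℝ) (hv : ∀ j, IntegrableOn (v j) (Set.Icc 0 T))
    (J : ℕ → ℕ → ℝ → ℝ)
    (hJ0 : ∀ j t, J j 0 t = 1)
    (hJ : ∀ j k, 1 ≤ k → k ≤ n → ∀ t,
      J j k t = ∫ s in (0:ℝ)..t, f k s * J j (k - 1) s * v j s)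
    (w : ℝ → ℝ) (hw : ContinuousOn w (Set.Icc 0 T))
    (hconv : ∀ t ∈ Set.Icc (0:ℝ) T,
      Tendsto (fun j => ∫ s in (0:ℝ)..t, v j s) atTop (nhds (w t)))
    (K : ℝ)
    (hbound : ∀ j, ∀ t ∈ Set.Icc (0:ℝ) T, |∫ s in (0:ℝ)..t, v j s| ≤ K) :
    ∀ t ∈ Set.Icc (0:ℝ) T,
      Tendsto (fun j => J j n t) atTop (nhds (Φ w n t)) := by
  have hF : ∀ j ≤ n, ∀ k ∈ Finset.Icc 1 j, ContDiffOn ℝ 1 (coeffProd f j k) (Icc 0 T) :=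
    fun j hjn k hk => contDiffOn_coeffProd hf (Finset.mem_Icc.1 hk).2 hjn
  have hF' : ∀ j ≤ n, ∀ k ∈ Finset.Icc 1 j, ∀ x ∈ Icc 0 T,
      HasDerivWithinAt (coeffProd f j k) (fd j k x) (Icc 0 T) x :=
    fun j hjn k hk => hfd j k (Finset.mem_Icc.1 hk).1 (Finset.mem_Icc.1 hk).2 hjn
  have hfdc : ∀ j ≤ n, ∀ k ∈ Finset.Icc 1 j, ContinuousOn (fd j k) (Icc 0 T) :=
    fun j hjn k hk => (hF j hjn k hk).continuousOn_of_hasDerivWithinAt_Icc hT (hF' j hjn k hk)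
  have hfc : ∀ i, 1 ≤ i → i ≤ n → ContinuousOn (f i) (Icc 0 T) :=
    fun i hi hin => (hf i hi hin).continuousOn
  have hJeq : ∀ m j, 1 ≤ j → j ≤ n → ∀ t ∈ Icc 0 T,
      J m j t = phiStep f fd (J m) (fun x => ∫ s in (0 : ℝ)..x, v m s) j t :=
    fun m => iterated_eq_phiStep hF hF' hfdc hfc (hv m) (hJ0 m) (hJ m)
  obtain ⟨C, hC⟩ := exists_bound_of_eq_phiStep hT.le
    (fun j hjn k hk => (hF j hjn k hk).continuousOn) hfdc hbound hJ0 hJeq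
  exact tendsto_of_eq_phiStep hfdc (fun m => continuousOn_iterated hfc (hv m) (hJ0 m) (hJ m))
    (fun m => continuousOn_intervalIntegral_Icc (hv m)) hC hbound hconv hJ0 (hΦ0 w) hJeq
    (hΦ w hw) n le_rfl

/-- Pathwise content of the first assertion of Theorem 2.1 (hypotheses
(H1)-(H3)): if the primitives `w_j(t) = ∫₀ᵗ v_j` converge pointwise on `[0,T]`
to a continuous `w` and are uniformly bounded by `K`, then
`J_n^{(j)}(t) → Φ_n[w](t)` for every `t ∈ [0,T]`. -/
theorem stmt10
    (T : ℝ) (hT : 0 < T) (n : ℕ) (hn : 1 ≤ n)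
    (f : ℕ → ℝ → ℝ)
    (hf : ∀ i, 1 ≤ i → i ≤ n → ContDiffOn ℝ 1 (f i) (Set.Icc 0 T))
    (fd : ℕ → ℕ → ℝ → ℝ)
    (hfd : ∀ j k, 1 ≤ k → k ≤ j → j ≤ n → ∀ t ∈ Set.Icc (0:ℝ) T,
      HasDerivWithinAt (fun s => ∏ l ∈ Finset.Icc 1 k, f (j + 1 - l) s)
        (fd j k t) (Set.Icc 0 T) t)
    (Φ : (ℝ → ℝ) → ℕ → ℝ → ℝ)
    (hΦ0 : ∀ u t, Φ u 0 t = 1)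
    (hΦ : ∀ u : ℝ → ℝ, ContinuousOn u (Set.Icc 0 T) →
      ∀ j, 1 ≤ j → j ≤ n → ∀ t ∈ Set.Icc (0:ℝ) T,
      Φ u j t
        = (∑ k ∈ Finset.Icc 1 j,
            (-1 : ℝ) ^ (k + 1) * Φ u (j - k) t
              * (u t ^ k / (Nat.factorial k : ℝ))
              * ∏ l ∈ Finset.Icc 1 k, f (j + 1 - l) t)
        + ∑ k ∈ Finset.Icc 1 j,
            (-1 : ℝ) ^ k *
              ∫ s in (0:ℝ)..t,
                Φ u (j - k) s * (u s ^ k / (Nat.factorial k : ℝ)) * fd j k s)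
    (v : ℕ → ℝ → ℝ) (hv : ∀ j, IntegrableOn (v j) (Set.Icc 0 T))
    (J : ℕ → ℕ → ℝ → ℝ)
    (hJ0 : ∀ j t, J j 0 t = 1)
    (hJ : ∀ j k, 1 ≤ k → k ≤ n → ∀ t,
      J j k t = ∫ s in (0:ℝ)..t, f k s * J j (k - 1) s * v j s)
    (w : ℝ → ℝ) (hw : ContinuousOn w (Set.Icc 0 T))
    (hconv : ∀ t ∈ Set.Icc (0:ℝ) T,
      Tendsto (fun j => ∫ s in (0:ℝ)..t, v j s) atTop (nhds (w t)))
    (K : ℝ) (hK : 0 < K)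
    (hbound : ∀ j, ∀ t ∈ Set.Icc (0:ℝ) T, |∫ s in (0:ℝ)..t, v j s| ≤ K) :
    ∀ t ∈ Set.Icc (0:ℝ) T,
      Tendsto (fun j => J j n t) atTop (nhds (Φ w n t)) :=
  stmt10_general T hT n f hf fd hfd Φ hΦ0 hΦ v hv J hJ0 hJ w hw hconv K hbound
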